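/- Let x, y ∈ ℤ² be non-collinear with deg(x) = 1. If the triangle with vertices 0, x, x+y contains no lattice point in its interior, then deg(y) = 1 or deg(x+y) = 1. -/

import Mathlib

/-- The image of a lattice point in the real plane. -/
def toR2 (p : ℤ × ℤ) : ℝ × ℝ := ((p.1 : ℝ), (p.2 : ℝ))

/-- The triangle (convex hull) with vertices `0`, `x`, `x + y` in the real plane. -/
def tri (x y : ℤ × ℤ) : Set (ℝ × ℝ) := convexHull ℝ {(0 : ℝ × ℝ), toR2 x, toR2 (x + y)}

/-!
If `m = deg y` and `n = deg (x + y)` are both at least `2`, they are distinct, since any common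
divisor divides `x = (x + y) - y`. Write `y = m • u` and `x + y = n • v`. If `m < n`, the lattice
point `x + u - v = (1 - 1/m) • x + (1/m - 1/n) • (x + y)` lies in the interior of the triangle;
if `n < m`, so does `v - u = (1/m) • x + (1/n - 1/m) • (x + y)`.
-/

theorem affineIndependent_zero_of_linearIndependent {E : Type*} [AddCommGroup E] [Module ℝ E]
    {a b : E} (hab : LinearIndependent ℝ ![a, b]) : AffineIndependent ℝ ![0, a, b] := by
  rw [affineIndependent_iff_not_collinear_set, collinear_iff_of_mem (p₀ := 0) (by simp)]
  rintro ⟨v, hv⟩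
  obtain ⟨r, hr⟩ := hv a (by simp)
  obtain ⟨q, hq⟩ := hv b (by simp)
  rw [vadd_eq_add, add_zero] at hr hq
  have hqr := LinearIndependent.pair_iff.1 hab q (-r) (by rw [hr, hq]; module)
  exact hab.ne_zero 0 (by simp [hr, neg_eq_zero.1 hqr.2])

theorem smul_add_smul_mem_interior_convexHull {E : Type*} [NormedAddCommGroup E]
    [NormedSpace ℝ E] (hE : Module.finrank ℝ E = 2) {a b : E} (hab : LinearIndependent ℝ ![a, b])
    {s t : ℝ} (hs : 0 < s) (ht : 0 < t) (hst : s + t < 1) :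
    s • a + t • b ∈ interior (convexHull ℝ {0, a, b}) := by
  have : FiniteDimensional ℝ E := .of_finrank_pos (by omega)
  have hind := affineIndependent_zero_of_linearIndependent hab
  let T : AffineBasis (Fin 3) ℝ E :=
    ⟨![0, a, b], hind, by rw [hind.affineSpan_eq_top_iff_card_eq_finrank_add_one, hE]; rfl⟩
  have hT : ⇑T = ![0, a, b] := rfl
  let w : Fin 3 → ℝ := ![1 - s - t, s, t]
  have hw : ∑ i, w i = 1 := by simp [w, Fin.sum_univ_three]; ring
  have hcomb : s • a + t • b = Finset.univ.affineCombination ℝ T w := by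
    rw [Finset.affineCombination_eq_linear_combination _ _ _ hw]
    simp [hT, w, Fin.sum_univ_three]
  have hrange : Set.range T = {0, a, b} := by
    rw [hT, Matrix.range_cons, Matrix.range_cons_cons_empty, Set.singleton_union]
  rw [← hrange, T.interior_convexHull, hcomb]
  intro i
  rw [T.coord_apply_combination_of_mem (Finset.mem_univ i) hw]
  fin_cases i <;> simp [w] <;> linarith

theorem toR2_add (p q : ℤ × ℤ) : toR2 (p + q) = toR2 p + toR2 q := by
  simp [toR2]

theorem toR2_sub (p q : ℤ × ℤ) : toR2 (p - q) = toR2 p - toR2 q := by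
  simp [toR2]

theorem toR2_zsmul (k : ℤ) (p : ℤ × ℤ) : toR2 (k • p) = (k : ℝ) • toR2 p := by
  simp [toR2]

theorem toR2_eq_inv_smul {p u : ℤ × ℤ} {m : ℕ} (hm : m ≠ 0) (hp : p = (m : ℤ) • u) :
    toR2 u = (m : ℝ)⁻¹ • toR2 p := by
  rw [hp, toR2_zsmul, smul_smul, Int.cast_natCast, inv_mul_cancel₀ (by exact_mod_cast hm),
    one_smul]

theorem det_add_right (x y : ℤ × ℤ) :
    x.1 * (x + y).2 - x.2 * (x + y).1 = x.1 * y.2 - x.2 * y.1 := by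
  simp only [Prod.fst_add, Prod.snd_add]
  ring

theorem gcd_ne_zero_of_det_ne_zero {x y : ℤ × ℤ} (h : x.1 * y.2 - x.2 * y.1 ≠ 0) :
    Int.gcd y.1 y.2 ≠ 0 := by
  rw [Ne, Int.gcd_eq_zero_iff]
  rintro ⟨h1, h2⟩
  simp [h1, h2] at h

theorem exists_eq_gcd_smul (p : ℤ × ℤ) : ∃ u : ℤ × ℤ, p = (Int.gcd p.1 p.2 : ℤ) • u :=
  ⟨(p.1 / Int.gcd p.1 p.2, p.2 / Int.gcd p.1 p.2), by
    ext <;> simp [Int.mul_ediv_cancel' (Int.gcd_dvd_left _ _),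
      Int.mul_ediv_cancel' (Int.gcd_dvd_right _ _)]⟩

theorem coprime_gcd_of_gcd_eq_one {x y : ℤ × ℤ} (hx : Int.gcd x.1 x.2 = 1) :
    Nat.Coprime (Int.gcd y.1 y.2) (Int.gcd (x + y).1 (x + y).2) := by
  rw [Nat.Coprime, ← Nat.dvd_one, ← hx, ← Int.natCast_dvd_natCast]
  set g : ℤ := ((Nat.gcd (Int.gcd y.1 y.2) (Int.gcd (x + y).1 (x + y).2) : ℕ) : ℤ)
  have hy : g ∣ (Int.gcd y.1 y.2 : ℤ) := Int.natCast_dvd_natCast.2 (Nat.gcd_dvd_left _ _)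
  have hz : g ∣ (Int.gcd (x + y).1 (x + y).2 : ℤ) :=
    Int.natCast_dvd_natCast.2 (Nat.gcd_dvd_right _ _)
  refine Int.dvd_coe_gcd ?_ ?_
  · simpa using dvd_sub (hz.trans (Int.gcd_dvd_left _ _)) (hy.trans (Int.gcd_dvd_left _ _))
  · simpa using dvd_sub (hz.trans (Int.gcd_dvd_right _ _)) (hy.trans (Int.gcd_dvd_right _ _))

theorem linearIndependent_toR2_of_det_ne_zero {x y : ℤ × ℤ} (h : x.1 * y.2 - x.2 * y.1 ≠ 0) :
    LinearIndependent ℝ ![toR2 x, toR2 y] := by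
  have hdet : (x.1 * y.2 - x.2 * y.1 : ℝ) ≠ 0 := by exact_mod_cast h
  refine LinearIndependent.pair_iff.2 fun s t hst => ?_
  simp only [toR2, Prod.smul_mk, smul_eq_mul, Prod.mk_add_mk, Prod.mk_eq_zero] at hst
  obtain ⟨h1, h2⟩ := hst
  constructor
  · refine (mul_eq_zero.1 ?_).resolve_right hdet
    linear_combination (y.2 : ℝ) * h1 - (y.1 : ℝ) * h2
  · refine (mul_eq_zero.1 ?_).resolve_right hdet
    linear_combination (x.1 : ℝ) * h2 - (x.2 : ℝ) * h1

theorem smul_add_smul_mem_interior_tri {x y : ℤ × ℤ} (h : x.1 * y.2 - x.2 * y.1 ≠ 0)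
    {s t : ℝ} (hs : 0 < s) (ht : 0 < t) (hst : s + t < 1) :
    s • toR2 x + t • toR2 (x + y) ∈ interior (tri x y) := by
  refine smul_add_smul_mem_interior_convexHull (by simp) ?_ hs ht hst
  exact linearIndependent_toR2_of_det_ne_zero (by rwa [det_add_right])

theorem toR2_add_sub_mem_interior_tri {x y u v : ℤ × ℤ} (h : x.1 * y.2 - x.2 * y.1 ≠ 0)
    {m n : ℕ} (hm : 2 ≤ m) (hmn : m < n) (hu : y = (m : ℤ) • u) (hv : x + y = (n : ℤ) • v) :
    toR2 (x + u - v) ∈ interior (tri x y) := by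
  have hm' : (1 : ℝ) < m := by exact_mod_cast hm
  have hmn' : (m : ℝ) < n := by exact_mod_cast hmn
  have hp : toR2 (x + u - v) =
      (1 - (m : ℝ)⁻¹) • toR2 x + ((m : ℝ)⁻¹ - (n : ℝ)⁻¹) • toR2 (x + y) := by
    rw [toR2_sub, toR2_add, toR2_eq_inv_smul (by omega) hu, toR2_eq_inv_smul (by omega) hv,
      toR2_add]
    module
  rw [hp]
  refine smul_add_smul_mem_interior_tri h (sub_pos.2 (inv_lt_one_of_one_lt₀ hm'))
    (sub_pos.2 (inv_strictAnti₀ (by linarith) hmn')) ?_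
  linarith [inv_pos.2 (show (0 : ℝ) < n by linarith)]

theorem toR2_sub_mem_interior_tri {x y u v : ℤ × ℤ} (h : x.1 * y.2 - x.2 * y.1 ≠ 0)
    {m n : ℕ} (hn : 2 ≤ n) (hnm : n < m) (hu : y = (m : ℤ) • u) (hv : x + y = (n : ℤ) • v) :
    toR2 (v - u) ∈ interior (tri x y) := by
  have hn' : (1 : ℝ) < n := by exact_mod_cast hn
  have hnm' : (n : ℝ) < m := by exact_mod_cast hnm
  have hp : toR2 (v - u) = (m : ℝ)⁻¹ • toR2 x + ((n : ℝ)⁻¹ - (m : ℝ)⁻¹) • toR2 (x + y) := by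
    rw [toR2_sub, toR2_eq_inv_smul (by omega) hu, toR2_eq_inv_smul (by omega) hv, toR2_add]
    module
  rw [hp]
  refine smul_add_smul_mem_interior_tri h (inv_pos.2 (by linarith))
    (sub_pos.2 (inv_strictAnti₀ (by linarith) hnm')) ?_
  linarith [inv_lt_one_of_one_lt₀ hn']

/-- If `x, y` are non-collinear, `deg x = 1` and the triangle with vertices `0, x, x+y`
has no interior lattice point, then `deg y = 1` or `deg (x+y) = 1`. -/
theorem deg_one_of_no_interior_point (x y : ℤ × ℤ)
    (h : x.1 * y.2 - x.2 * y.1 ≠ 0) (hx : Int.gcd x.1 x.2 = 1)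
    (hempty : ∀ p : ℤ × ℤ, toR2 p ∉ interior (tri x y)) :
    Int.gcd y.1 y.2 = 1 ∨ Int.gcd (x + y).1 (x + y).2 = 1 := by
  by_contra! ⟨hm1, hn1⟩
  obtain ⟨u, hu⟩ := exists_eq_gcd_smul y
  obtain ⟨v, hv⟩ := exists_eq_gcd_smul (x + y)
  have hm0 := gcd_ne_zero_of_det_ne_zero h
  have hn0 := gcd_ne_zero_of_det_ne_zero ((det_add_right x y).trans_ne h)
  have hmn : Int.gcd y.1 y.2 ≠ Int.gcd (x + y).1 (x + y).2 := fun heq => by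
    have hcop := coprime_gcd_of_gcd_eq_one (y := y) hx
    rw [heq, Nat.coprime_self] at hcop
    exact hn1 hcop
  rcases hmn.lt_or_gt with hlt | hgt
  · exact hempty _ (toR2_add_sub_mem_interior_tri h (by omega) hlt hu hv)
  · exact hempty _ (toR2_sub_mem_interior_tri h (by omega) hgt hu hv)
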